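/- arXiv:2106.15775 — 4 statements merged into one kernel-verified Lean document; each statement's English description precedes it below -/
import Mathlib

section
/- Let H be a Hilbert space and A_i, B_i ∈ L(H;H) for i = 1,…,n. Assume each A_i is positive definite, B_1 is positive definite, and B_i is positive semi-definite for i ≥ 2. Then the operator norm of (∑_i B_i^{1/2} A_i B_i^{1/2})^{-1/2} (∑_i B_i) (∑_i B_i^{1/2} A_i B_i^{1/2})^{-1/2} is at most max_i ‖A_i^{-1}‖. -/
open scoped RealInnerProductSpace InnerProduct

/-!
Cauchy–Schwarz for the form `⟪A ·, ·⟫` gives `‖y‖² ≤ ‖A⁻¹‖ ⟪A y, y⟫`, i.e. `1 ≤ ‖A⁻¹‖ • A` in the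
Loewner order. Conjugating by `B_i^{1/2}` gives `B_i ≤ M • B_i^{1/2} A_i B_i^{1/2}` with
`M = maxᵢ ‖A_i⁻¹‖`; summing over `i` and conjugating by `R`, which satisfies `R S R = 1` for the
sum `S` of the right-hand sides, gives `0 ≤ R (∑ B_i) R ≤ M • 1`,
and a positive operator below `M • 1` has norm at most `M`.
-/

namespace ContinuousLinearMap

theorem conj_adjoint_le_conj_adjoint {𝕜 E : Type*} [RCLike 𝕜] [NormedAddCommGroup E]
    [InnerProductSpace 𝕜 E] [CompleteSpace E] {S T : E →L[𝕜] E} (h : S ≤ T) (U : E →L[𝕜] E) :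
    U ∘L S ∘L U† ≤ U ∘L T ∘L U† := by
  rw [le_def] at h ⊢
  simpa [comp_sub, sub_comp] using h.conj_adjoint U

instance {𝕜 E : Type*} [RCLike 𝕜] [NormedAddCommGroup E] [InnerProductSpace 𝕜 E] :
    IsOrderedAddMonoid (E →L[𝕜] E) where
  add_le_add_left _ _ h _ := by simpa [le_def] using h

variable {E : Type*} [NormedAddCommGroup E] [InnerProductSpace ℝ E]

theorem IsPositive.inner_sq_le {T : E →L[ℝ] E} (hT : T.IsPositive) (x y : E) :
    ⟪T x, y⟫ ^ 2 ≤ ⟪T x, x⟫ * ⟪T y, y⟫ := by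
  have := LinearMap.BilinForm.apply_mul_apply_le_of_forall_zero_le
    (LinearMap.BilinForm.compLeft (innerₗ E) T) hT.inner_nonneg_left x y
  simpa [sq, hT.inner_left_eq_inner_right y, real_inner_comm] using this

theorem IsPositive.norm_sq_le_norm_mul_inner {A A' : E →L[ℝ] E} (hA : A.IsPositive)
    (hAA' : A ∘L A' = 1) (y : E) : ‖y‖ ^ 2 ≤ ‖A'‖ * ⟪A y, y⟫ := by
  have hy : A (A' y) = y := by simpa using DFunLike.congr_fun hAA' y
  have hcs := hA.inner_sq_le (A' y) y
  rw [hy, real_inner_self_eq_norm_sq] at hcs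
  have hA'y : ⟪y, A' y⟫ ≤ ‖A'‖ * ‖y‖ ^ 2 := by
    calc ⟪y, A' y⟫ ≤ ‖y‖ * ‖A' y‖ := real_inner_le_norm _ _
      _ ≤ ‖y‖ * (‖A'‖ * ‖y‖) := by gcongr; exact A'.le_opNorm y
      _ = ‖A'‖ * ‖y‖ ^ 2 := by ring
  rcases eq_or_ne y 0 with rfl | hy0
  · simp
  have hAy := hA.inner_nonneg_left y
  have hy2 : 0 < ‖y‖ ^ 2 := by positivity
  nlinarith

theorem IsPositive.one_le_smul_of_comp_eq_one [CompleteSpace E] {A A' : E →L[ℝ] E}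
    (hA : A.IsPositive) (hAA' : A ∘L A' = 1) {M : ℝ} (hM : ‖A'‖ ≤ M) : 1 ≤ M • A := by
  rw [le_def, isPositive_iff']
  refine ⟨((IsSelfAdjoint.all M).smul hA.isSelfAdjoint).sub (.one _), fun x => ?_⟩
  have hx := hA.norm_sq_le_norm_mul_inner hAA' x
  have hMx := mul_le_mul_of_nonneg_right hM (hA.inner_nonneg_left x)
  simp only [sub_apply, smul_apply, one_apply_eq_self, inner_sub_left, real_inner_smul_left,
    real_inner_self_eq_norm_sq]
  linarith

theorem norm_le_of_nonneg_of_le_smul_one [CompleteSpace E] {T : E →L[ℝ] E} {M : ℝ}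
    (hM : 0 ≤ M) (hT : 0 ≤ T) (hTM : T ≤ M • 1) : ‖T‖ ≤ M := by
  rw [nonneg_iff_isPositive] at hT
  rw [norm_eq_iSup_rayleighQuotient T hT.isSymmetric]
  refine ciSup_le fun x => ?_
  have hup : ⟪T x, x⟫ ≤ M * ‖x‖ ^ 2 := by
    simpa [inner_sub_left, real_inner_smul_left] using hTM.inner_nonneg_left x
  rcases eq_or_ne x 0 with rfl | hx
  · simpa using hM
  rw [rayleighQuotient, abs_of_nonneg (div_nonneg (hT.2 x) (by positivity)),
    div_le_iff₀ (by positivity)]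
  simpa [reApplyInnerSelf_apply] using hup

end ContinuousLinearMap

open ContinuousLinearMap

theorem stmt0_general
    {H : Type*} [NormedAddCommGroup H] [InnerProductSpace ℝ H] [CompleteSpace H]
    {n : ℕ} (hn : 0 < n)
    (A B sqB Ainv : Fin n → (H →L[ℝ] H)) (R : H →L[ℝ] H)
    -- each A i is positive definite
    (hAsa : ∀ i, IsSelfAdjoint (A i))
    (hApd : ∀ i, ∃ c > 0, ∀ x : H, c * ‖x‖ ^ 2 ≤ ⟪A i x, x⟫)
    -- B 1 (the first one) is positive definite, the others positive semi-definite
    (hBsa : ∀ i, IsSelfAdjoint (B i))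
    (hBpsd : ∀ i, ∀ x : H, 0 ≤ ⟪B i x, x⟫)
    -- sqB i is the positive square root of B i
    (hsqBsa : ∀ i, IsSelfAdjoint (sqB i))
    (hsqB : ∀ i, (sqB i).comp (sqB i) = B i)
    -- Ainv i is the (bounded) inverse of A i
    (hAinv : ∀ i, (Ainv i).comp (A i) = 1 ∧ (A i).comp (Ainv i) = 1)
    -- R is the inverse of the positive square root of ∑ i, B i^{1/2} A i B i^{1/2}
    (hRsa : IsSelfAdjoint R)
    (hR : R.comp ((∑ i, (sqB i).comp ((A i).comp (sqB i))).comp R) = 1) :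
    ‖R.comp ((∑ i, B i).comp R)‖ ≤
      Finset.univ.sup' ⟨⟨0, hn⟩, Finset.mem_univ _⟩ (fun i => ‖Ainv i‖) := by
  set M := Finset.univ.sup' ⟨⟨0, hn⟩, Finset.mem_univ _⟩ (fun i => ‖Ainv i‖)
  have hM (i : Fin n) : ‖Ainv i‖ ≤ M := Finset.le_sup' (fun j => ‖Ainv j‖) (Finset.mem_univ i)
  have hA (i : Fin n) : (A i).IsPositive := by
    obtain ⟨c, hc, hcA⟩ := hApd i
    exact (isPositive_iff' _).2 ⟨hAsa i, fun x => le_trans (by positivity) (hcA x)⟩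
  have hB (i : Fin n) : B i ≤ M • (sqB i ∘L A i ∘L sqB i) := by
    simpa [(hsqBsa i).adjoint_eq, one_def, hsqB i] using
      conj_adjoint_le_conj_adjoint ((hA i).one_le_smul_of_comp_eq_one (hAinv i).2 (hM i)) (sqB i)
  have hsum : ∑ i, B i ≤ M • ∑ i, sqB i ∘L A i ∘L sqB i := by
    rw [Finset.smul_sum]
    exact Finset.sum_le_sum fun i _ => hB i
  have hsum_nonneg : 0 ≤ ∑ i, B i := Finset.sum_nonneg fun i _ =>
    (nonneg_iff_isPositive _).2 ((isPositive_iff' _).2 ⟨hBsa i, hBpsd i⟩)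
  refine norm_le_of_nonneg_of_le_smul_one ((norm_nonneg _).trans (hM ⟨0, hn⟩)) ?_ ?_
  · simpa [hRsa.adjoint_eq] using conj_adjoint_le_conj_adjoint hsum_nonneg R
  · simpa [hRsa.adjoint_eq, hR] using conj_adjoint_le_conj_adjoint hsum R

/-- Operator lemma (general form). -/
theorem stmt0
    {H : Type*} [NormedAddCommGroup H] [InnerProductSpace ℝ H] [CompleteSpace H]
    {n : ℕ} (hn : 0 < n)
    (A B sqB Ainv : Fin n → (H →L[ℝ] H)) (R : H →L[ℝ] H)
    -- each A i is positive definite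
    (hAsa : ∀ i, IsSelfAdjoint (A i))
    (hApd : ∀ i, ∃ c > 0, ∀ x : H, c * ‖x‖ ^ 2 ≤ ⟪A i x, x⟫)
    -- B 1 (the first one) is positive definite, the others positive semi-definite
    (hBsa : ∀ i, IsSelfAdjoint (B i))
    (hBpd : ∃ c > 0, ∀ x : H, c * ‖x‖ ^ 2 ≤ ⟪B ⟨0, hn⟩ x, x⟫)
    (hBpsd : ∀ i, ∀ x : H, 0 ≤ ⟪B i x, x⟫)
    -- sqB i is the positive square root of B i
    (hsqBsa : ∀ i, IsSelfAdjoint (sqB i))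
    (hsqBpsd : ∀ i, ∀ x : H, 0 ≤ ⟪sqB i x, x⟫)
    (hsqB : ∀ i, (sqB i).comp (sqB i) = B i)
    -- Ainv i is the (bounded) inverse of A i
    (hAinv : ∀ i, (Ainv i).comp (A i) = 1 ∧ (A i).comp (Ainv i) = 1)
    -- R is the inverse of the positive square root of ∑ i, B i^{1/2} A i B i^{1/2}
    (hRsa : IsSelfAdjoint R)
    (hRpsd : ∀ x : H, 0 ≤ ⟪R x, x⟫)
    (hR : R.comp ((∑ i, (sqB i).comp ((A i).comp (sqB i))).comp R) = 1) :
    ‖R.comp ((∑ i, B i).comp R)‖ ≤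
      Finset.univ.sup' ⟨⟨0, hn⟩, Finset.mem_univ _⟩ (fun i => ‖Ainv i‖) :=
  stmt0_general hn A B sqB Ainv R hAsa hApd hBsa hBpsd hsqBsa hsqB hAinv hRsa hR
end

section
/- For any sequence of Hilbert–Schmidt operators B_0, …, B_{T−1} on a finite-dimensional Hilbert space, any λ > 0, and any α ∈ (0,1], defining Σ_t = λI + ∑_{τ<t} B_τ† B_τ, it holds that ∑_{t=0}^{T−1} min{‖B_t Σ_t^{−1/2}‖^{2α}, 1} ≤ 2 T^{1−α} [1 + log(det(Σ_T)/det(Σ_0))]. -/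
/-!
Write `C_t = B_t Σ_t^{-1/2}`. Conjugating `Σ_{t+1} = Σ_t + B_t† B_t` by `Σ_t^{-1/2}` gives
`det Σ_{t+1} = det (1 + C_t† C_t) · det Σ_t`, and `det (1 + C† C) ≥ 1 + tr (C† C) ≥ 1 + ‖C‖²`.
Since `min x 1 ≤ 2 log (1 + x)`, the terms `min (‖C_t‖², 1)` telescope to at most
`2 log (det Σ_T / det Σ_0)`. The exponent `α` is handled by the power-mean inequality
`∑ w_t^α ≤ T^{1-α} (∑ w_t)^α` followed by `s^α ≤ 1 + s`.
-/

open scoped RealInnerProductSpace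
open Module Finset

theorem Real.min_le_two_mul_log_one_add {x : ℝ} (hx : 0 ≤ x) :
    min x 1 ≤ 2 * Real.log (1 + x) := by
  have hmin : min x 1 ≤ 2 * (2 * x / (x + 2)) := by
    rw [mul_div_assoc', le_div_iff₀ (by positivity)]
    rcases le_total x 1 with h | h
    · rw [min_eq_left h]; nlinarith
    · rw [min_eq_right h]; linarith
  linarith [Real.le_log_one_add_of_nonneg hx]

theorem Real.min_one_rpow {y α : ℝ} (hy : 0 ≤ y) (hα : 0 ≤ α) :
    min y 1 ^ α = min (y ^ α) 1 := by
  rcases le_total y 1 with h | h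
  · rw [min_eq_left h, min_eq_left (Real.rpow_le_one hy h hα)]
  · rw [min_eq_right h, min_eq_right (Real.one_le_rpow h hα), Real.one_rpow]

theorem Real.rpow_le_one_add {y α : ℝ} (hy : 0 ≤ y) (hα0 : 0 ≤ α) (hα1 : α ≤ 1) :
    y ^ α ≤ 1 + y := by
  rcases le_total y 1 with h | h
  · linarith [Real.rpow_le_one hy h hα0]
  · linarith [Real.rpow_le_self_of_one_le h hα1]

theorem Finset.sum_rpow_le_card_rpow_mul_rpow_sum {ι : Type*} (s : Finset ι) {f : ι → ℝ}
    (hf : ∀ i ∈ s, 0 ≤ f i) {α : ℝ} (hα0 : 0 < α) (hα1 : α ≤ 1) :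
    ∑ i ∈ s, f i ^ α ≤ (#s : ℝ) ^ (1 - α) * (∑ i ∈ s, f i) ^ α := by
  have hpow : ∀ i ∈ s, (f i ^ α) ^ α⁻¹ = f i := fun i hi =>
    Real.rpow_rpow_inv (hf i hi) hα0.ne'
  have key := Real.rpow_sum_le_const_mul_sum_rpow_of_nonneg (s := s) (f := fun i => f i ^ α)
    (one_le_inv₀ hα0 |>.mpr hα1) (fun i hi => Real.rpow_nonneg (hf i hi) α)
  rw [sum_congr rfl hpow] at key
  have hsum : 0 ≤ ∑ i ∈ s, f i ^ α := sum_nonneg fun i hi => Real.rpow_nonneg (hf i hi) α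
  calc ∑ i ∈ s, f i ^ α = ((∑ i ∈ s, f i ^ α) ^ α⁻¹) ^ α := (Real.rpow_inv_rpow hsum hα0.ne').symm
    _ ≤ ((#s : ℝ) ^ (α⁻¹ - 1) * ∑ i ∈ s, f i) ^ α := by gcongr
    _ = (#s : ℝ) ^ (1 - α) * (∑ i ∈ s, f i) ^ α := by
      rw [Real.mul_rpow (by positivity) (sum_nonneg hf), ← Real.rpow_mul (by positivity),
        sub_mul, inv_mul_cancel₀ hα0.ne', one_mul]

theorem Finset.sum_min_rpow_one_le {ι : Type*} (s : Finset ι) {x : ι → ℝ}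
    (hx : ∀ i ∈ s, 0 ≤ x i) {α L : ℝ} (hα0 : 0 < α) (hα1 : α ≤ 1)
    (hL : ∑ i ∈ s, min (x i) 1 ≤ 2 * L) :
    ∑ i ∈ s, min (x i ^ α) 1 ≤ 2 * (#s : ℝ) ^ (1 - α) * (1 + L) := by
  have hw : ∀ i ∈ s, 0 ≤ min (x i) 1 := fun i hi => le_min (hx i hi) zero_le_one
  calc ∑ i ∈ s, min (x i ^ α) 1 = ∑ i ∈ s, min (x i) 1 ^ α :=
        sum_congr rfl fun i hi => (Real.min_one_rpow (hx i hi) hα0.le).symm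
    _ ≤ (#s : ℝ) ^ (1 - α) * (∑ i ∈ s, min (x i) 1) ^ α :=
        sum_rpow_le_card_rpow_mul_rpow_sum s hw hα0 hα1
    _ ≤ (#s : ℝ) ^ (1 - α) * (1 + ∑ i ∈ s, min (x i) 1) := by
        gcongr
        exact Real.rpow_le_one_add (sum_nonneg hw) hα0.le hα1
    _ ≤ (#s : ℝ) ^ (1 - α) * (2 * (1 + L)) := by
        gcongr
        linarith
    _ = 2 * (#s : ℝ) ^ (1 - α) * (1 + L) := by ring

theorem Finset.one_add_sum_le_prod_one_add {ι R : Type*} [CommSemiring R] [PartialOrder R]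
    [IsOrderedRing R] (s : Finset ι) (f : ι → R) (hf : ∀ i ∈ s, 0 ≤ f i) :
    1 + ∑ i ∈ s, f i ≤ ∏ i ∈ s, (1 + f i) := by
  induction s using cons_induction with
  | empty => simp
  | cons a s ha ih =>
    rw [sum_cons, prod_cons]
    have hfa : 0 ≤ f a := hf a (mem_cons_self a s)
    have hfs : ∀ i ∈ s, 0 ≤ f i := fun i hi => hf i (mem_cons_of_mem hi)
    calc 1 + (f a + ∑ i ∈ s, f i)
        ≤ 1 + (f a + ∑ i ∈ s, f i) + f a * ∑ i ∈ s, f i :=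
          le_add_of_nonneg_right (mul_nonneg hfa (sum_nonneg hfs))
      _ = (1 + f a) * (1 + ∑ i ∈ s, f i) := by ring
      _ ≤ (1 + f a) * ∏ i ∈ s, (1 + f i) := by
          gcongr
          · exact add_nonneg zero_le_one hfa
          · exact ih hfs

namespace ContinuousLinearMap

variable {K M : Type*} [TopologicalSpace M] [AddCommGroup M]

theorem det_mul_det_sq_eq_one [CommRing K] [Module K M] {R S : M →L[K] M}
    (h : R ∘L (S ∘L R) = 1) :
    LinearMap.det (S : M →ₗ[K] M) * LinearMap.det (R : M →ₗ[K] M) ^ 2 = 1 := by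
  have := congrArg (fun f : M →L[K] M => LinearMap.det (f : M →ₗ[K] M)) h
  simp only [toLinearMap_comp, LinearMap.det_comp, one_def, coe_id, LinearMap.det_id] at this
  linear_combination this

theorem det_pos_of_comp_comp_eq_one [Module ℝ M] {R S : M →L[ℝ] M} (h : R ∘L (S ∘L R) = 1) :
    0 < LinearMap.det (S : M →ₗ[ℝ] M) :=
  pos_of_mul_pos_left ((det_mul_det_sq_eq_one h).symm ▸ one_pos) (sq_nonneg _)

end ContinuousLinearMap

variable {E F : Type*} [NormedAddCommGroup E] [InnerProductSpace ℝ E] [FiniteDimensional ℝ E]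
  [NormedAddCommGroup F] [InnerProductSpace ℝ F] [CompleteSpace F]

namespace LinearMap

theorem IsSymmetric.det_one_add {T : E →ₗ[ℝ] E} (hT : T.IsSymmetric) {n : ℕ}
    (hn : finrank ℝ E = n) : (1 + T).det = ∏ i, (1 + hT.eigenvalues hn i) := by
  rw [← LinearMap.det_toMatrix (hT.eigenvectorBasis hn).toBasis, map_add, LinearMap.toMatrix_one,
    hT.toMatrix_eigenvectorBasis hn, ← Matrix.diagonal_one, Matrix.diagonal_add,
    Matrix.det_diagonal]
  rfl

theorem IsPositive.one_add_trace_le_det {T : E →ₗ[ℝ] E} (hT : T.IsPositive) :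
    1 + trace ℝ E T ≤ (1 + T).det := by
  rw [hT.isSymmetric.trace_eq_sum_eigenvalues rfl, hT.isSymmetric.det_one_add rfl]
  simpa using one_add_sum_le_prod_one_add _ _ fun i _ => hT.nonneg_eigenvalues rfl i

/-- Extend `x` to an orthonormal basis: `⟪T x, x⟫` is then one of the nonnegative diagonal terms
of the trace. -/
theorem IsPositive.inner_apply_self_le_trace {T : E →ₗ[ℝ] E} (hT : T.IsPositive) {x : E}
    (hx : ‖x‖ = 1) : ⟪T x, x⟫ ≤ trace ℝ E T := by
  classical
  have hv : Orthonormal ℝ ((↑) : ({x} : Set E) → E) := by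
    rw [orthonormal_subtype_iff_ite]
    simp_all
  obtain ⟨u, b, hxu, hb⟩ := hv.exists_orthonormalBasis_extension
  have hxu' : x ∈ u := hxu rfl
  rw [trace_eq_sum_inner T b, hb]
  calc ⟪T x, x⟫ = ⟪(⟨x, hxu'⟩ : u).1, T (⟨x, hxu'⟩ : u).1⟫ := real_inner_comm _ _
    _ ≤ ∑ i : u, ⟪i.1, T i.1⟫ :=
      single_le_sum (f := fun i : u => ⟪i.1, T i.1⟫)
        (fun i _ => hT.inner_nonneg_right i.1) (mem_univ _)

theorem IsPositive.inner_apply_self_le_trace_mul {T : E →ₗ[ℝ] E} (hT : T.IsPositive) (x : E) :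
    ⟪T x, x⟫ ≤ trace ℝ E T * ‖x‖ ^ 2 := by
  rcases eq_or_ne x 0 with rfl | hx
  · simp
  have hx' : 0 < ‖x‖ := norm_pos_iff.mpr hx
  have := hT.inner_apply_self_le_trace (norm_smul_inv_norm (𝕜 := ℝ) hx)
  rw [map_smul, real_inner_smul_left, real_inner_smul_right, ← mul_assoc, ← sq] at this
  rwa [inv_pow, inv_mul_le_iff₀ (by positivity), mul_comm] at this

end LinearMap

namespace ContinuousLinearMap

theorem sq_norm_le_trace_adjoint_comp_self (C : E →L[ℝ] F) :
    ‖C‖ ^ 2 ≤ LinearMap.trace ℝ E (adjoint C ∘L C) := by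
  have htr : 0 ≤ LinearMap.trace ℝ E (adjoint C ∘L C) :=
    (isPositive_adjoint_comp_self C).toLinearMap.trace_nonneg
  have hbound : ‖C‖ ≤ √(LinearMap.trace ℝ E (adjoint C ∘L C)) := by
    refine opNorm_le_bound C (Real.sqrt_nonneg _) fun x => ?_
    rw [apply_norm_eq_sqrt_inner_adjoint_left, RCLike.re_to_real, ← Real.sqrt_sq (norm_nonneg x),
      ← Real.sqrt_mul htr]
    exact Real.sqrt_le_sqrt
      ((isPositive_adjoint_comp_self C).toLinearMap.inner_apply_self_le_trace_mul x)
  calc ‖C‖ ^ 2 ≤ √(LinearMap.trace ℝ E (adjoint C ∘L C)) ^ 2 := by gcongr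
    _ = _ := Real.sq_sqrt htr

theorem one_add_sq_norm_le_det_one_add_adjoint_comp_self (C : E →L[ℝ] F) :
    1 + ‖C‖ ^ 2 ≤ LinearMap.det ((1 + adjoint C ∘L C : E →L[ℝ] E) : E →ₗ[ℝ] E) :=
  calc 1 + ‖C‖ ^ 2 ≤ 1 + LinearMap.trace ℝ E (adjoint C ∘L C) := by
        gcongr; exact sq_norm_le_trace_adjoint_comp_self C
    _ ≤ _ := (isPositive_adjoint_comp_self C).toLinearMap.one_add_trace_le_det

end ContinuousLinearMap

open ContinuousLinearMap in
theorem IsSelfAdjoint.det_add_adjoint_comp_self {R S : E →L[ℝ] E} (hR : IsSelfAdjoint R)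
    (h : R ∘L (S ∘L R) = 1) (A : E →L[ℝ] F) :
    LinearMap.det ((S + adjoint A ∘L A : E →L[ℝ] E) : E →ₗ[ℝ] E) =
      LinearMap.det ((1 + adjoint (A ∘L R) ∘L (A ∘L R) : E →L[ℝ] E) : E →ₗ[ℝ] E) *
        LinearMap.det (S : E →ₗ[ℝ] E) := by
  have hconj : R ∘L ((S + adjoint A ∘L A) ∘L R) = 1 + adjoint (A ∘L R) ∘L (A ∘L R) := by
    rw [adjoint_comp, hR.adjoint_eq, add_comp, comp_add, h]
    rfl
  have := congrArg (fun f : E →L[ℝ] E => LinearMap.det (f : E →ₗ[ℝ] E)) hconj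
  simp only [toLinearMap_comp, LinearMap.det_comp] at this
  rw [← this]
  linear_combination
    -LinearMap.det ((S + adjoint A ∘L A : E →L[ℝ] E) : E →ₗ[ℝ] E) * det_mul_det_sq_eq_one h

open ContinuousLinearMap in
theorem IsSelfAdjoint.one_add_sq_norm_comp_le_det_div {R S : E →L[ℝ] E} (hR : IsSelfAdjoint R)
    (h : R ∘L (S ∘L R) = 1) (A : E →L[ℝ] F) :
    1 + ‖A ∘L R‖ ^ 2 ≤
      LinearMap.det ((S + adjoint A ∘L A : E →L[ℝ] E) : E →ₗ[ℝ] E) /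
        LinearMap.det (S : E →ₗ[ℝ] E) := by
  have hS := det_pos_of_comp_comp_eq_one h
  rw [le_div_iff₀ hS, hR.det_add_adjoint_comp_self h A]
  exact mul_le_mul_of_nonneg_right (one_add_sq_norm_le_det_one_add_adjoint_comp_self _) hS.le

theorem stmt4_general
    {d T : ℕ} (lam : ℝ) (α : ℝ) (hα : α ∈ Set.Ioc (0 : ℝ) 1)
    (B Sig R : ℕ → (EuclideanSpace ℝ (Fin d) →L[ℝ] EuclideanSpace ℝ (Fin d)))
    (hSig : ∀ t, Sig t =
      lam • 1 + ∑ τ ∈ Finset.range t, (ContinuousLinearMap.adjoint (B τ)).comp (B τ))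
    -- R t is the inverse of the positive square root of Sig t
    (hRsa : ∀ t, IsSelfAdjoint (R t))
    (hR : ∀ t, (R t).comp ((Sig t).comp (R t)) = 1) :
    ∑ t ∈ Finset.range T, min (‖(B t).comp (R t)‖ ^ (2 * α)) 1 ≤
      2 * (T : ℝ) ^ (1 - α) *
        (1 + Real.log
          (LinearMap.det (Sig T : EuclideanSpace ℝ (Fin d) →ₗ[ℝ] EuclideanSpace ℝ (Fin d)) /
           LinearMap.det (Sig 0 : EuclideanSpace ℝ (Fin d) →ₗ[ℝ] EuclideanSpace ℝ (Fin d)))) := by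
  set detSig := fun t => LinearMap.det (Sig t : EuclideanSpace ℝ (Fin d) →ₗ[ℝ] _)
  have hpos : ∀ t, 0 < detSig t := fun t => ContinuousLinearMap.det_pos_of_comp_comp_eq_one (hR t)
  have hSig_succ : ∀ t, Sig (t + 1) = Sig t + ContinuousLinearMap.adjoint (B t) ∘L B t := by
    intro t
    rw [hSig, hSig, sum_range_succ, add_assoc]
  have hstep : ∀ t, min (‖(B t).comp (R t)‖ ^ 2) 1 ≤
      2 * (Real.log (detSig (t + 1)) - Real.log (detSig t)) := by
    intro t
    rw [← Real.log_div (hpos (t + 1)).ne' (hpos t).ne']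
    refine (Real.min_le_two_mul_log_one_add (sq_nonneg _)).trans ?_
    gcongr
    simpa only [detSig, hSig_succ] using (hRsa t).one_add_sq_norm_comp_le_det_div (hR t) (B t)
  have hsum : ∑ t ∈ range T, min (‖(B t).comp (R t)‖ ^ 2) 1 ≤
      2 * Real.log (detSig T / detSig 0) := by
    rw [Real.log_div (hpos T).ne' (hpos 0).ne', ← sum_range_sub (fun t => Real.log (detSig t)),
      mul_sum]
    exact sum_le_sum fun t _ => hstep t
  have hnorm : ∀ t, ‖(B t).comp (R t)‖ ^ (2 * α) = (‖(B t).comp (R t)‖ ^ 2) ^ α := fun t => by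
    rw [Real.rpow_mul (norm_nonneg _), Real.rpow_two]
  simpa only [hnorm, card_range] using
    sum_min_rpow_one_le (range T) (fun t _ => sq_nonneg ‖(B t).comp (R t)‖) hα.1 hα.2 hsum

/-- log-determinant bound with Hölder exponent α. -/
theorem stmt4
    {d T : ℕ} (lam : ℝ) (hlam : 0 < lam) (α : ℝ) (hα : α ∈ Set.Ioc (0 : ℝ) 1)
    (B Sig R : ℕ → (EuclideanSpace ℝ (Fin d) →L[ℝ] EuclideanSpace ℝ (Fin d)))
    (hSig : ∀ t, Sig t =
      lam • 1 + ∑ τ ∈ Finset.range t, (ContinuousLinearMap.adjoint (B τ)).comp (B τ))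
    -- R t is the inverse of the positive square root of Sig t
    (hRsa : ∀ t, IsSelfAdjoint (R t))
    (hRpsd : ∀ t, ∀ x : EuclideanSpace ℝ (Fin d), 0 ≤ ⟪R t x, x⟫)
    (hR : ∀ t, (R t).comp ((Sig t).comp (R t)) = 1) :
    ∑ t ∈ Finset.range T, min (‖(B t).comp (R t)‖ ^ (2 * α)) 1 ≤
      2 * (T : ℝ) ^ (1 - α) *
        (1 + Real.log
          (LinearMap.det (Sig T : EuclideanSpace ℝ (Fin d) →ₗ[ℝ] EuclideanSpace ℝ (Fin d)) /
           LinearMap.det (Sig 0 : EuclideanSpace ℝ (Fin d) →ₗ[ℝ] EuclideanSpace ℝ (Fin d)))) :=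
  stmt4_general lam α hα B Sig R hSig hRsa hR
end

section
/- For any sequence of Hilbert–Schmidt operators B_t and α ∈ (0,1], with Σ_t = λI + ∑_{τ<t} B_τ†B_τ on a finite-dimensional Hilbert space, ∑_{t=0}^{T−1} min{max{‖B_t Σ_t^{−1/2}‖^4, ‖B_t Σ_t^{−1/2}‖^{2α}}, 1} ≤ 2 T^{1−α} [1 + log(det(Σ_T)/det(Σ_0))]. -/
open scoped RealInnerProductSpace

/-!
Conjugating `Σ_{t+1} = Σ_t + B_tᴴ B_t` by `R_t = Σ_t^{-1/2}` gives `R_t Σ_{t+1} R_t = 1 + A_tᴴ A_t`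
with `A_t = B_t R_t`, so `det Σ_T / det Σ_0 = ∏_t det (1 + A_tᴴ A_t)`. The norm `‖A_t‖²` of the
positive operator `A_tᴴ A_t` is one of its eigenvalues and the others are nonnegative, hence
`det (1 + A_tᴴ A_t) ≥ 1 + x_t` with `x_t = ‖A_t‖²`. It remains to bound scalars:
`min (max (x², x^α)) 1 ≤ (min x 1)^α`, Hölder gives `∑ (min x_t 1)^α ≤ T^{1-α} (∑ min x_t 1)^α`,
and `min x 1 ≤ 2 log (1 + x)`.
-/

open Module Finset Real

namespace Real

theorem min_le_two_mul_log_one_add_s9 {x : ℝ} (hx : 0 ≤ x) : min x 1 ≤ 2 * log (1 + x) := by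
  have hlog : x / (1 + x) ≤ log (1 + x) := by
    have hx' : x / (1 + x) = 1 - (1 + x)⁻¹ := by field_simp; ring
    exact hx' ▸ one_sub_inv_le_log_of_pos (by positivity)
  have hfrac : min x 1 ≤ 2 * (x / (1 + x)) := by
    rw [mul_div_assoc', le_div_iff₀ (by positivity)]
    rcases le_total x 1 with h | h
    · rw [min_eq_left h]; nlinarith
    · rw [min_eq_right h]; linarith
  linarith

theorem min_max_rpow_le_min_sq_rpow {y α : ℝ} (hy : 0 ≤ y) (hα₀ : 0 ≤ α) (hα₁ : α ≤ 2) :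
    min (max (y ^ (4 : ℝ)) (y ^ (2 * α))) 1 ≤ min (y ^ 2) 1 ^ α := by
  rcases le_total y 1 with h | h
  · have h4 : y ^ (4 : ℝ) ≤ y ^ (2 * α) :=
      rpow_le_rpow_of_exponent_ge' hy h (by positivity) (by linarith)
    rw [min_eq_left (pow_le_one₀ hy h), max_eq_right h4, ← rpow_natCast, ← rpow_mul hy]
    exact min_le_left _ _
  · rw [min_eq_right (one_le_pow₀ h), one_rpow]
    exact min_le_right _ _

theorem sum_rpow_le_card_rpow_mul_rpow_sum {ι : Type*} (s : Finset ι) {f : ι → ℝ}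
    (hf : ∀ i ∈ s, 0 ≤ f i) {α : ℝ} (hα₀ : 0 < α) (hα₁ : α ≤ 1) :
    ∑ i ∈ s, f i ^ α ≤ (#s : ℝ) ^ (1 - α) * (∑ i ∈ s, f i) ^ α := by
  have hp : 1 ≤ α⁻¹ := (one_le_inv₀ hα₀).2 hα₁
  have key := rpow_sum_le_const_mul_sum_rpow_of_nonneg s hp (f := fun i ↦ f i ^ α)
    fun i hi ↦ rpow_nonneg (hf i hi) α
  rw [sum_congr rfl fun i hi ↦ rpow_rpow_inv (hf i hi) hα₀.ne'] at key
  have hsum : 0 ≤ ∑ i ∈ s, f i ^ α := sum_nonneg fun i hi ↦ rpow_nonneg (hf i hi) α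
  calc ∑ i ∈ s, f i ^ α = ((∑ i ∈ s, f i ^ α) ^ α⁻¹) ^ α := (rpow_inv_rpow hsum hα₀.ne').symm
    _ ≤ ((#s : ℝ) ^ (α⁻¹ - 1) * ∑ i ∈ s, f i) ^ α := by gcongr
    _ = (#s : ℝ) ^ (1 - α) * (∑ i ∈ s, f i) ^ α := by
      rw [mul_rpow (by positivity) (sum_nonneg hf), ← rpow_mul (by positivity)]
      congr 2
      field_simp

theorem sum_min_rpow_le_two_mul_card_rpow_mul_one_add_sum_log {ι : Type*} (s : Finset ι)
    {y : ι → ℝ} (hy : ∀ i ∈ s, 0 ≤ y i) {α : ℝ} (hα₀ : 0 < α) (hα₁ : α ≤ 1) :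
    ∑ i ∈ s, min (y i) 1 ^ α ≤ 2 * (#s : ℝ) ^ (1 - α) * (1 + ∑ i ∈ s, log (1 + y i)) := by
  set m := ∑ i ∈ s, min (y i) 1
  have hm : 0 ≤ m := sum_nonneg fun i hi ↦ le_min (hy i hi) zero_le_one
  have hm_rpow : m ^ α ≤ 1 + m := by
    rcases le_total m 1 with h | h
    · linarith [rpow_le_one hm h hα₀.le]
    · linarith [rpow_le_self_of_one_le h hα₁]
  have hm_log : m ≤ 2 * ∑ i ∈ s, log (1 + y i) := by
    rw [mul_sum]
    exact sum_le_sum fun i hi ↦ min_le_two_mul_log_one_add_s9 (hy i hi)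
  calc ∑ i ∈ s, min (y i) 1 ^ α ≤ (#s : ℝ) ^ (1 - α) * m ^ α :=
        sum_rpow_le_card_rpow_mul_rpow_sum s (fun i hi ↦ le_min (hy i hi) zero_le_one) hα₀ hα₁
    _ ≤ (#s : ℝ) ^ (1 - α) * (2 * (1 + ∑ i ∈ s, log (1 + y i))) := by gcongr; linarith
    _ = 2 * (#s : ℝ) ^ (1 - α) * (1 + ∑ i ∈ s, log (1 + y i)) := by ring

end Real

namespace ContinuousLinearMap

theorem det_comp_comp_self {𝕜 M : Type*} [CommRing 𝕜] [TopologicalSpace M] [AddCommGroup M]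
    [Module 𝕜 M] (A S : M →L[𝕜] M) : (A ∘L (S ∘L A)).det = A.det ^ 2 * S.det := by
  simp only [det, toLinearMap_comp, LinearMap.det_comp]
  ring

section InnerProductSpace

variable {E F : Type*} [NormedAddCommGroup E] [InnerProductSpace ℝ E]
  [NormedAddCommGroup F] [InnerProductSpace ℝ F]

theorem IsPositive.hasEigenvalue_norm [FiniteDimensional ℝ E] [Nontrivial E] {M : E →L[ℝ] E}
    (hM : M.IsPositive) : End.HasEigenvalue (M : E →ₗ[ℝ] E) ‖M‖ := by
  have hnonneg (x : E) : 0 ≤ M.rayleighQuotient x := div_nonneg (hM.2 x) (sq_nonneg _)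
  have hbdd : BddAbove (Set.range fun x : {x : E // x ≠ 0} ↦ M.rayleighQuotient x) :=
    ⟨‖M‖, Set.forall_mem_range.2 fun x ↦ (le_abs_self _).trans (M.rayleighQuotient_le_norm x)⟩
  obtain ⟨v, hv⟩ := exists_ne (0 : E)
  have : Nonempty {x : E // x ≠ 0} := ⟨⟨v, hv⟩⟩
  -- the norm of a symmetric operator is the top of `|rayleighQuotient|`, and here `|·|` is harmless
  have hsup : ‖M‖ = ⨆ x : {x : E // x ≠ 0}, M.rayleighQuotient x := by
    rw [M.norm_eq_iSup_rayleighQuotient hM.isSymmetric]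
    refine le_antisymm (ciSup_le fun x ↦ ?_) (ciSup_le fun x ↦ ?_)
    · rw [abs_of_nonneg (hnonneg x)]
      rcases eq_or_ne x 0 with rfl | hx
      · exact M.rayleighQuotient_apply_zero ▸ (hnonneg v).trans (le_ciSup hbdd ⟨v, hv⟩)
      · exact le_ciSup hbdd ⟨x, hx⟩
    · exact (le_abs_self _).trans (le_ciSup M.bddAbove_rayleighQuotient (x : E))
  rw [hsup]
  exact (hM.isSymmetric : (M : E →ₗ[ℝ] E).IsSymmetric).hasEigenvalue_iSup_of_finiteDimensional

theorem IsPositive.one_add_norm_le_det_one_add [FiniteDimensional ℝ E] {M : E →L[ℝ] E}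
    (hM : M.IsPositive) : 1 + ‖M‖ ≤ (1 + M).det := by
  rcases subsingleton_or_nontrivial E with hE | hE
  · simp [Subsingleton.elim M 0, det]
  have hT : (M : E →ₗ[ℝ] E).IsSymmetric := hM.isSymmetric
  obtain ⟨i, hi⟩ := hT.exists_eigenvalues_eq rfl hM.hasEigenvalue_norm
  have hμ : ∀ j, 0 ≤ hT.eigenvalues rfl j := hM.toLinearMap.nonneg_eigenvalues rfl
  rw [det, ← LinearMap.det_toMatrix (hT.eigenvectorBasis rfl).toBasis]
  simp only [toLinearMap_add, toLinearMap_one, map_add, LinearMap.toMatrix_one,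
    hT.toMatrix_eigenvectorBasis, ← Matrix.diagonal_one, Matrix.diagonal_add, Matrix.det_diagonal,
    Function.comp_apply, RCLike.ofReal_real_eq_id, id]
  simp only [RCLike.ofReal_real_eq_id, id] at hi
  rw [← mul_prod_erase _ _ (mem_univ i), hi]
  exact le_mul_of_one_le_right (by positivity) (one_le_prod fun j _ ↦ by linarith [hμ j])

variable [CompleteSpace E] [CompleteSpace F]

theorem det_add_adjoint_comp_self {S R : E →L[ℝ] E} (B : E →L[ℝ] F) (hR : IsSelfAdjoint R)
    (hRS : R ∘L (S ∘L R) = 1) :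
    (S + adjoint B ∘L B).det = S.det * (1 + adjoint (B ∘L R) ∘L (B ∘L R)).det := by
  have hconj : R ∘L ((S + adjoint B ∘L B) ∘L R) = 1 + adjoint (B ∘L R) ∘L (B ∘L R) := by
    rw [adjoint_comp, hR.adjoint_eq, add_comp, comp_add, hRS]
    rfl
  have hS := R.det_comp_comp_self S
  have hSB := R.det_comp_comp_self (S + adjoint B ∘L B)
  rw [hRS, det, toLinearMap_one, map_one] at hS
  rw [hconj] at hSB
  rw [hSB, ← mul_assoc, mul_comm S.det, ← hS, one_mul]

theorem det_eq_det_mul_prod_det_one_add {S R : ℕ → E →L[ℝ] E} {B : ℕ → E →L[ℝ] F}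
    (hS : ∀ t, S (t + 1) = S t + adjoint (B t) ∘L B t) (hR : ∀ t, IsSelfAdjoint (R t))
    (hRS : ∀ t, R t ∘L (S t ∘L R t) = 1) (T : ℕ) :
    (S T).det = (S 0).det * ∏ t ∈ range T, (1 + adjoint (B t ∘L R t) ∘L (B t ∘L R t)).det := by
  induction T with
  | zero => simp
  | succ T ih =>
    rw [prod_range_succ, ← mul_assoc, ← ih, hS, det_add_adjoint_comp_self _ (hR T) (hRS T)]

end InnerProductSpace

end ContinuousLinearMap

theorem stmt9_general
    {d T : ℕ} (lam : ℝ) (α : ℝ) (hα : α ∈ Set.Ioc (0 : ℝ) 1)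
    (B Sig R : ℕ → (EuclideanSpace ℝ (Fin d) →L[ℝ] EuclideanSpace ℝ (Fin d)))
    (hSig : ∀ t, Sig t =
      lam • 1 + ∑ τ ∈ Finset.range t, (ContinuousLinearMap.adjoint (B τ)).comp (B τ))
    -- R t is the inverse of the positive square root of Sig t
    (hRsa : ∀ t, IsSelfAdjoint (R t))
    (hR : ∀ t, (R t).comp ((Sig t).comp (R t)) = 1) :
    ∑ t ∈ Finset.range T,
        min (max (‖(B t).comp (R t)‖ ^ (4 : ℝ)) (‖(B t).comp (R t)‖ ^ (2 * α))) 1 ≤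
      2 * (T : ℝ) ^ (1 - α) *
        (1 + Real.log
          (LinearMap.det (Sig T : EuclideanSpace ℝ (Fin d) →ₗ[ℝ] EuclideanSpace ℝ (Fin d)) /
           LinearMap.det (Sig 0 : EuclideanSpace ℝ (Fin d) →ₗ[ℝ] EuclideanSpace ℝ (Fin d)))) := by
  obtain ⟨hα₀, hα₁⟩ := hα
  set A := fun t ↦ (B t).comp (R t)
  have hstep (t : ℕ) : Sig (t + 1) = Sig t + ContinuousLinearMap.adjoint (B t) ∘L B t := by
    rw [hSig, hSig, sum_range_succ, add_assoc]
  have hdet (t : ℕ) : 1 + ‖A t‖ ^ 2 ≤ (1 + ContinuousLinearMap.adjoint (A t) ∘L A t).det := by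
    rw [sq, ← ContinuousLinearMap.norm_adjoint_comp_self]
    exact (ContinuousLinearMap.isPositive_adjoint_comp_self _).one_add_norm_le_det_one_add
  have hdet₀ : (Sig 0).det ≠ 0 := by
    have h := (R 0).det_comp_comp_self (Sig 0)
    rw [hR, ContinuousLinearMap.det, ContinuousLinearMap.toLinearMap_one, map_one] at h
    exact right_ne_zero_of_mul_eq_one h.symm
  have hpos (t : ℕ) : 0 < (1 + ContinuousLinearMap.adjoint (A t) ∘L A t).det := by
    linarith [hdet t, sq_nonneg ‖A t‖]
  have hlog : ∑ t ∈ range T, log (1 + ‖A t‖ ^ 2) ≤ log ((Sig T).det / (Sig 0).det) := by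
    rw [ContinuousLinearMap.det_eq_det_mul_prod_det_one_add hstep hRsa hR,
      mul_div_cancel_left₀ _ hdet₀, log_prod fun t _ ↦ (hpos t).ne']
    exact sum_le_sum fun t _ ↦ log_le_log (by positivity) (hdet t)
  calc _ ≤ ∑ t ∈ range T, min (‖A t‖ ^ 2) 1 ^ α :=
        sum_le_sum fun t _ ↦ min_max_rpow_le_min_sq_rpow (norm_nonneg _) hα₀.le (by linarith)
    _ ≤ 2 * (T : ℝ) ^ (1 - α) * (1 + ∑ t ∈ range T, log (1 + ‖A t‖ ^ 2)) := by
        simpa using sum_min_rpow_le_two_mul_card_rpow_mul_one_add_sum_log (range T)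
          (fun t _ ↦ sq_nonneg ‖A t‖) hα₀ hα₁
    _ ≤ _ := by gcongr

/-- corollary of the log-determinant bound with max of two powers. -/
theorem stmt9
    {d T : ℕ} (lam : ℝ) (hlam : 0 < lam) (α : ℝ) (hα : α ∈ Set.Ioc (0 : ℝ) 1)
    (B Sig R : ℕ → (EuclideanSpace ℝ (Fin d) →L[ℝ] EuclideanSpace ℝ (Fin d)))
    (hSig : ∀ t, Sig t =
      lam • 1 + ∑ τ ∈ Finset.range t, (ContinuousLinearMap.adjoint (B τ)).comp (B τ))
    -- R t is the inverse of the positive square root of Sig t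
    (hRsa : ∀ t, IsSelfAdjoint (R t))
    (hRpsd : ∀ t, ∀ x : EuclideanSpace ℝ (Fin d), 0 ≤ ⟪R t x, x⟫)
    (hR : ∀ t, (R t).comp ((Sig t).comp (R t)) = 1) :
    ∑ t ∈ Finset.range T,
        min (max (‖(B t).comp (R t)‖ ^ (4 : ℝ)) (‖(B t).comp (R t)‖ ^ (2 * α))) 1 ≤
      2 * (T : ℝ) ^ (1 - α) *
        (1 + Real.log
          (LinearMap.det (Sig T : EuclideanSpace ℝ (Fin d) →ₗ[ℝ] EuclideanSpace ℝ (Fin d)) /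
           LinearMap.det (Sig 0 : EuclideanSpace ℝ (Fin d) →ₗ[ℝ] EuclideanSpace ℝ (Fin d)))) :=
  stmt9_general lam α hα B Sig R hSig hRsa hR
end

section
/- Let {P_Θ}_{Θ∈Π} be a family of orthogonal projections on a Hilbert space H', each P_Θ projecting onto ker(Ψ(Θ)†)^⊥ for bounded operators Ψ(Θ)† : H' → H, and let P be the orthogonal projection onto the closure of the sum of the subspaces ker(Ψ(Θ)†)^⊥ over Θ ∈ Π. Suppose M₀: H → H' is a (possibly nonlinear) map such that for every Θ, P_Θ ∘ M₀ is linear. Then P ∘ M₀ is linear. -/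
/-!
Each `P_Θ` factors through `P`, since `ran P_Θ ⊆ ran P`; hence `P_Θ` kills the defect
`P M₀(aφ₁ + bφ₂) - a P M₀(φ₁) - b P M₀(φ₂)`. A vector of `ran P` killed by every `P_Θ` lies in
`⋂_Θ ran P_Θᗮ = (∑_Θ ran P_Θ)ᗮ = ran Pᗮ`, so it is zero.
-/

namespace Submodule

variable {𝕜 E : Type*} [RCLike 𝕜] [NormedAddCommGroup E] [InnerProductSpace 𝕜 E]

/-- Unlike `Submodule.starProjection`, this needs no `K.HasOrthogonalProjection` instance. -/
def IsOrthogonalProjectionOnto (K : Submodule 𝕜 E) (p : E → E) : Prop :=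
  ∀ x, p x ∈ K ∧ x - p x ∈ Kᗮ

variable {K S : Submodule 𝕜 E} {p q : E →ₗ[𝕜] E}

theorem IsOrthogonalProjectionOnto.apply_eq_zero (hp : K.IsOrthogonalProjectionOnto p) {x : E}
    (hx : x ∈ Kᗮ) : p x = 0 := by
  have hpx : p x ∈ Kᗮ := by
    simpa using Kᗮ.sub_mem hx (hp x).2
  exact disjoint_def.mp K.orthogonal_disjoint _ (hp x).1 hpx

theorem IsOrthogonalProjectionOnto.apply_apply_of_le (hp : K.IsOrthogonalProjectionOnto p)
    (hq : S.IsOrthogonalProjectionOnto q) (hKS : K ≤ S) (x : E) : p (q x) = p x := by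
  have h := hp.apply_eq_zero (orthogonal_le hKS (hq x).2)
  rwa [map_sub, sub_eq_zero, eq_comm] at h

theorem IsOrthogonalProjectionOnto.eq_zero_of_mem_closure_iSup {ι : Type*}
    {K : ι → Submodule 𝕜 E} {p : ι → E →ₗ[𝕜] E}
    (hp : ∀ i, (K i).IsOrthogonalProjectionOnto (p i)) {x : E}
    (hx : x ∈ (⨆ i, K i).topologicalClosure) (hpx : ∀ i, p i x = 0) : x = 0 := by
  have hx_perp : x ∈ (⨆ i, K i).topologicalClosureᗮ := by
    rw [orthogonal_closure, ← iInf_orthogonal, mem_iInf]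
    intro i
    simpa [hpx i] using (hp i x).2
  exact disjoint_def.mp (orthogonal_disjoint _) x hx hx_perp

theorem isLinearMap_comp_of_forall_isLinearMap_comp {ι F : Type*} [AddCommGroup F] [Module 𝕜 F]
    {K : ι → Submodule 𝕜 E} {p : ι → E →ₗ[𝕜] E}
    (hp : ∀ i, (K i).IsOrthogonalProjectionOnto (p i))
    (hq : (⨆ i, K i).topologicalClosure.IsOrthogonalProjectionOnto q) (f : F → E)
    (hf : ∀ i, IsLinearMap 𝕜 (fun y => p i (f y))) : IsLinearMap 𝕜 (fun y => q (f y)) := by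
  have hpq (i : ι) (x : E) : p i (q x) = p i x :=
    (hp i).apply_apply_of_le hq ((le_iSup K i).trans (le_topologicalClosure _)) x
  have hS (x : E) : q x ∈ (⨆ i, K i).topologicalClosure := (hq x).1
  constructor
  · intro y₁ y₂
    refine sub_eq_zero.mp (IsOrthogonalProjectionOnto.eq_zero_of_mem_closure_iSup hp
      (sub_mem (hS _) (add_mem (hS _) (hS _))) fun i => ?_)
    rw [map_sub, map_add, hpq, hpq, hpq, (hf i).map_add, sub_self]
  · intro c y
    refine sub_eq_zero.mp (IsOrthogonalProjectionOnto.eq_zero_of_mem_closure_iSup hp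
      (sub_mem (hS _) (smul_mem _ c (hS _))) fun i => ?_)
    rw [map_sub, map_smul, hpq, hpq, (hf i).map_smul, sub_self]

end Submodule

theorem stmt18_general
    {H H' : Type*} [NormedAddCommGroup H] [InnerProductSpace ℝ H]
    [NormedAddCommGroup H'] [InnerProductSpace ℝ H']
    {P' : Type*} (Ψd : P' → (H' →L[ℝ] H)) (M0 : H → H')
    (PΘ : P' → (H' →L[ℝ] H')) (Pr : H' →L[ℝ] H')
    -- PΘ Θ is the orthogonal projection onto ker(Ψd Θ)^⊥
    (hPΘ : ∀ (Θ : P') (ψ : H'), PΘ Θ ψ ∈ (LinearMap.ker (Ψd Θ : H' →ₗ[ℝ] H))ᗮ ∧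
      ψ - PΘ Θ ψ ∈ ((LinearMap.ker (Ψd Θ : H' →ₗ[ℝ] H))ᗮ)ᗮ)
    -- Pr is the orthogonal projection onto the closure of the sum of the ker(Ψd Θ)^⊥
    (hPr : ∀ ψ : H', Pr ψ ∈ (⨆ Θ : P', (LinearMap.ker (Ψd Θ : H' →ₗ[ℝ] H))ᗮ).topologicalClosure ∧
      ψ - Pr ψ ∈ ((⨆ Θ : P', (LinearMap.ker (Ψd Θ : H' →ₗ[ℝ] H))ᗮ).topologicalClosure)ᗮ)
    -- each P_Θ ∘ M₀ is linear
    (hlin : ∀ Θ : P', IsLinearMap ℝ (fun φ : H => PΘ Θ (M0 φ))) :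
    IsLinearMap ℝ (fun φ : H => Pr (M0 φ)) :=
  Submodule.isLinearMap_comp_of_forall_isLinearMap_comp (p := fun Θ => (PΘ Θ : H' →ₗ[ℝ] H'))
    (q := (Pr : H' →ₗ[ℝ] H')) hPΘ hPr M0 hlin

/-- if each projected map P_Θ ∘ M₀ is linear, then P ∘ M₀ is linear,
where P_Θ projects onto ker(Ψ(Θ)†)^⊥ and P onto the closure of their sum. -/
theorem stmt18
    {H H' : Type*} [NormedAddCommGroup H] [InnerProductSpace ℝ H] [CompleteSpace H]
    [NormedAddCommGroup H'] [InnerProductSpace ℝ H'] [CompleteSpace H']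
    {P' : Type*} (Ψd : P' → (H' →L[ℝ] H)) (M0 : H → H')
    (PΘ : P' → (H' →L[ℝ] H')) (Pr : H' →L[ℝ] H')
    -- PΘ Θ is the orthogonal projection onto ker(Ψd Θ)^⊥
    (hPΘ : ∀ (Θ : P') (ψ : H'), PΘ Θ ψ ∈ (LinearMap.ker (Ψd Θ : H' →ₗ[ℝ] H))ᗮ ∧
      ψ - PΘ Θ ψ ∈ ((LinearMap.ker (Ψd Θ : H' →ₗ[ℝ] H))ᗮ)ᗮ)
    -- Pr is the orthogonal projection onto the closure of the sum of the ker(Ψd Θ)^⊥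
    (hPr : ∀ ψ : H', Pr ψ ∈ (⨆ Θ : P', (LinearMap.ker (Ψd Θ : H' →ₗ[ℝ] H))ᗮ).topologicalClosure ∧
      ψ - Pr ψ ∈ ((⨆ Θ : P', (LinearMap.ker (Ψd Θ : H' →ₗ[ℝ] H))ᗮ).topologicalClosure)ᗮ)
    -- each P_Θ ∘ M₀ is linear
    (hlin : ∀ Θ : P', IsLinearMap ℝ (fun φ : H => PΘ Θ (M0 φ))) :
    IsLinearMap ℝ (fun φ : H => Pr (M0 φ)) :=
  stmt18_general Ψd M0 PΘ Pr hPΘ hPr hlin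
end
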